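/- arXiv:1204.5823 — 5 statements merged into one kernel-verified Lean document; each statement's English description precedes it below -/
import Mathlib

section
/- Let k ≥ 1, m ≥ 1 and n = (2k+1)m. For j ∈ {0,…,n−1} let w(j) = ⌊j/(2k+1)⌋ + 1 ∈ {1,…,m}. Let x : {0,…,n−1} × {1,…,m} → ℝ be nonnegative and satisfy: (i) x(j,i) = 0 whenever i < w(j); (ii) ∑_{i=1}^{m} x(j,i) = 1 for every j; (iii) ∑_{j : w(j) ≤ i} ∑_{i'=1}^{i} x(j,i') ≥ (2k+1)i − k for every i ∈ {1,…,m}. For each j define h(j) = min{ i ∈ {1,…,m} : ∑_{l=1}^{i} x(j,l) ≥ 1/2 } (which exists by (ii) and satisfies h(j) ≥ w(j) by (i)). Then for every function g : {0,…,n−1} → {1,…,m} satisfying w(j) ≤ g(j) ≤ h(j) for all j, and for every i ∈ {1,…,m}, the number of indices j with g(j) ≤ i is at least (2k+1)i − 2k. -/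
/- **Statement 1 (Lemma: interval request covers are 2-feasible).**
Requests are `j ∈ {0,…,n−1}`, windows are `i ∈ {1,…,m}`, `n = (2k+1)m`, and
`w(j) = ⌊j/(2k+1)⌋ + 1`.  `x` is a fractional assignment satisfying the
request-cover LP constraints, `h(j)` is the first window by which `x`
half-assigns `j`, and `g` integrally assigns each request to a window in its
service interval `[w(j), h(j)]`.  Then the prefix batch sizes of `g` satisfy
`#{j : g(j) ≤ i} ≥ (2k+1)i − 2k` for every window `i`. -/
theorem stmt_1 (k m n : ℕ) (hk : 1 ≤ k) (hm : 1 ≤ m) (hn : n = (2 * k + 1) * m)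
    (x : ℕ → ℕ → ℝ)
    (hnn : ∀ j < n, ∀ i ∈ Finset.Icc 1 m, 0 ≤ x j i)
    (hzero : ∀ j < n, ∀ i ∈ Finset.Icc 1 m, i < j / (2 * k + 1) + 1 → x j i = 0)
    (hone : ∀ j < n, ∑ i ∈ Finset.Icc 1 m, x j i = 1)
    (hcard : ∀ i ∈ Finset.Icc 1 m,
      ((2 * k + 1) * i : ℝ) - k ≤
        ∑ j ∈ (Finset.range n).filter (fun j => j / (2 * k + 1) + 1 ≤ i),
          ∑ i' ∈ Finset.Icc 1 i, x j i')
    (h : ℕ → ℕ)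
    (hh : ∀ j < n, h j ∈ Finset.Icc 1 m ∧
      (1 / 2 : ℝ) ≤ ∑ l ∈ Finset.Icc 1 (h j), x j l ∧
      ∀ i ∈ Finset.Icc 1 m, (1 / 2 : ℝ) ≤ ∑ l ∈ Finset.Icc 1 i, x j l → h j ≤ i)
    (g : ℕ → ℕ)
    (hg : ∀ j < n, j / (2 * k + 1) + 1 ≤ g j ∧ g j ≤ h j) :
    ∀ i ∈ Finset.Icc 1 m,
      ((2 * k + 1) * i : ℤ) - 2 * k ≤
        (((Finset.range n).filter (fun j => g j ≤ i)).card : ℤ) := by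
  intro i hi
  rw [Finset.mem_Icc] at hi
  obtain ⟨hi1, hi2⟩ := hi
  set T := (Finset.range n).filter (fun j => j / (2 * k + 1) + 1 ≤ i) with hT
  set A := (Finset.range n).filter (fun j => h j ≤ i) with hA
  have hAsub : A ⊆ (Finset.range n).filter (fun j => g j ≤ i) := by
    intro j hj
    simp only [hA, Finset.mem_filter, Finset.mem_range] at hj ⊢
    exact ⟨hj.1, le_trans (hg j hj.1).2 hj.2⟩
  have hAT : A ⊆ T := by
    intro j hj
    simp only [hA, hT, Finset.mem_filter, Finset.mem_range] at hj ⊢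
    exact ⟨hj.1, le_trans (le_trans (hg j hj.1).1 (hg j hj.1).2) hj.2⟩
  have key : ∀ j : ℕ, (j / (2 * k + 1) + 1 ≤ i ↔ j < (2 * k + 1) * i) := by
    intro j
    rw [Nat.add_one_le_iff, Nat.div_lt_iff_lt_mul (by omega), Nat.mul_comm]
  have hTcard : T.card = (2 * k + 1) * i := by
    have : T = Finset.range ((2 * k + 1) * i) := by
      ext j
      simp only [hT, Finset.mem_filter, Finset.mem_range, key]
      constructor
      · exact fun hj => hj.2
      · intro hj
        exact ⟨lt_of_lt_of_le hj (by rw [hn]; exact Nat.mul_le_mul_left _ hi2), hj⟩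
    rw [this, Finset.card_range]
  -- sum bound: for j in A, s j ≤ 1; for j in T \ A, s j ≤ 1/2
  have hsle1 : ∀ j ∈ A, (∑ i' ∈ Finset.Icc 1 i, x j i') ≤ 1 := by
    intro j hj
    simp only [hA, Finset.mem_filter, Finset.mem_range] at hj
    rw [← hone j hj.1]
    apply Finset.sum_le_sum_of_subset_of_nonneg
    · exact Finset.Icc_subset_Icc_right hi2
    · intro l hl _; exact hnn j hj.1 l hl
  have hslehalf : ∀ j ∈ T \ A, (∑ i' ∈ Finset.Icc 1 i, x j i') ≤ 1 / 2 := by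
    intro j hj
    simp only [hT, hA, Finset.mem_sdiff, Finset.mem_filter, Finset.mem_range] at hj
    obtain ⟨⟨hjn, -⟩, hjA⟩ := hj
    by_contra hc
    push_neg at hc
    exact (by omega : ¬ (h j ≤ i))
      ((hh j hjn).2.2 i (Finset.mem_Icc.mpr ⟨hi1, hi2⟩) hc.le) |>.elim
  have hsplit : ∑ j ∈ T, ∑ i' ∈ Finset.Icc 1 i, x j i'
      ≤ (A.card : ℝ) * 1 + ((T \ A).card : ℝ) * (1 / 2) := by
    rw [← Finset.sum_sdiff hAT]
    have b1 : ∑ j ∈ T \ A, ∑ i' ∈ Finset.Icc 1 i, x j i' ≤ ((T \ A).card : ℝ) * (1 / 2) := by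
      calc ∑ j ∈ T \ A, ∑ i' ∈ Finset.Icc 1 i, x j i'
          ≤ ∑ _j ∈ T \ A, (1 / 2 : ℝ) := Finset.sum_le_sum hslehalf
        _ = ((T \ A).card : ℝ) * (1 / 2) := by rw [Finset.sum_const, nsmul_eq_mul]
    have b2 : ∑ j ∈ A, ∑ i' ∈ Finset.Icc 1 i, x j i' ≤ (A.card : ℝ) * 1 := by
      calc ∑ j ∈ A, ∑ i' ∈ Finset.Icc 1 i, x j i'
          ≤ ∑ _j ∈ A, (1 : ℝ) := Finset.sum_le_sum hsle1
        _ = (A.card : ℝ) * 1 := by rw [Finset.sum_const, nsmul_eq_mul]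
    linarith
  have hlp := hcard i (Finset.mem_Icc.mpr ⟨hi1, hi2⟩)
  have hcardsd : (T \ A).card = T.card - A.card := Finset.card_sdiff_of_subset hAT
  have hle : A.card ≤ T.card := Finset.card_le_card hAT
  have hAcard : ((2 * k + 1) * i : ℝ) - 2 * k ≤ (A.card : ℝ) := by
    have h1 : ((T \ A).card : ℝ) = (T.card : ℝ) - (A.card : ℝ) := by
      rw [hcardsd]; push_cast [hle]; ring
    have h2 : (T.card : ℝ) = (2 * k + 1) * i := by rw [hTcard]; push_cast; ring
    rw [h1, h2] at hsplit
    nlinarith [hsplit, hlp, (by positivity : (0:ℝ) ≤ (k:ℝ))]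
  have hfinal : ((2 * k + 1) * i : ℝ) - 2 * k
      ≤ ((((Finset.range n).filter (fun j => g j ≤ i)).card : ℝ)) := by
    refine le_trans hAcard ?_
    exact_mod_cast Nat.cast_le.mpr (Finset.card_le_card hAsub)
  exact_mod_cast hfinal
end

section
/- Let 𝓘 be a finite family of integer intervals and let M ⊆ ℤ be a finite minimal hitting set for 𝓘. Then there exists a subfamily 𝓓 ⊆ 𝓘 of pairwise disjoint intervals with |𝓓| ≥ ⌈|M|/2⌉; in particular, twice the maximum number of pairwise disjoint intervals in 𝓘 is at least |M|. -/
/-!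
Minimality gives every `m ∈ M` a private interval of `𝓘` meeting `M` only in `m`. Keep every
other point of `M` in increasing order: between two kept points lies a discarded point of `M`,
which neither of their private intervals contains, so by convexity the two intervals are disjoint.
This yields `⌈|M| / 2⌉` pairwise disjoint intervals.
-/

open Finset

theorem Set.OrdConnected.disjoint_of_notMem_of_lt_of_lt {α : Type*} [LinearOrder α]
    {I J : Set α} (hI : I.OrdConnected) (hJ : J.OrdConnected) {m p m' : α}
    (hm : m ∈ I) (hm' : m' ∈ J) (hpI : p ∉ I) (hpJ : p ∉ J) (hmp : m < p) (hpm' : p < m') :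
    Disjoint I J := by
  refine Set.disjoint_left.mpr fun x hxI hxJ ↦ ?_
  rcases le_or_gt x p with hxp | hpx
  · exact hpJ (hJ.out hxJ hm' ⟨hxp, hpm'.le⟩)
  · exact hpI (hI.out hm hxI ⟨hmp.le, hpx.le⟩)

theorem Finset.exists_subset_card_ge_half_separated {α : Type*} [LinearOrder α] (M : Finset α) :
    ∃ S ⊆ M, (#M + 1) / 2 ≤ #S ∧ ∀ s ∈ S, ∀ t ∈ S, s < t → ∃ p ∈ M, s < p ∧ p < t := by
  set k := #M
  set g := M.orderEmbOfFin rfl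
  -- the elements of even rank in `M`
  let h : Fin ((k + 1) / 2) → α := fun i ↦ g ⟨2 * i, by omega⟩
  have hmono : StrictMono h := fun i j hij ↦ g.strictMono (by simp only [Fin.mk_lt_mk]; omega)
  refine ⟨univ.image h, image_subset_iff.mpr fun i _ ↦ M.orderEmbOfFin_mem rfl _, ?_, ?_⟩
  · rw [card_image_of_injective _ hmono.injective, card_univ, Fintype.card_fin]
  · simp only [mem_image, mem_univ, true_and]
    rintro _ ⟨i, rfl⟩ _ ⟨j, rfl⟩ hij
    have hij : (i : ℕ) < j := hmono.lt_iff_lt.mp hij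
    refine ⟨g ⟨2 * i + 1, by omega⟩, M.orderEmbOfFin_mem rfl _, g.strictMono ?_, g.strictMono ?_⟩ <;>
      simp only [Fin.mk_lt_mk] <;> omega

theorem exists_inter_eq_singleton_of_minimal_hitting {α : Type*} [DecidableEq α]
    {𝓘 : Finset (Finset α)} {M : Finset α} (hhit : ∀ I ∈ 𝓘, (M ∩ I).Nonempty)
    (hmin : ∀ M' : Finset α, M' ⊂ M → ¬ (∀ I ∈ 𝓘, (M' ∩ I).Nonempty)) {m : α} (hm : m ∈ M) :
    ∃ I ∈ 𝓘, M ∩ I = {m} := by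
  obtain ⟨I, hI, hmiss⟩ : ∃ I ∈ 𝓘, ¬ (M.erase m ∩ I).Nonempty := by
    simpa using hmin _ (erase_ssubset hm)
  rw [not_nonempty_iff_eq_empty, erase_inter, erase_eq_empty_iff] at hmiss
  exact ⟨I, hI, hmiss.resolve_left (hhit I hI).ne_empty⟩

theorem stmt_2 (𝓘 : Finset (Finset ℤ))
    (hI : ∀ I ∈ 𝓘, ∃ a b : ℤ, a ≤ b ∧ I = Finset.Icc a b)
    (M : Finset ℤ)
    (hhit : ∀ I ∈ 𝓘, (M ∩ I).Nonempty)
    (hmin : ∀ M' : Finset ℤ, M' ⊂ M → ¬ (∀ I ∈ 𝓘, (M' ∩ I).Nonempty)) :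
    ∃ 𝓓 ⊆ 𝓘, (∀ I ∈ 𝓓, ∀ J ∈ 𝓓, I ≠ J → Disjoint I J) ∧
      (M.card + 1) / 2 ≤ 𝓓.card ∧ M.card ≤ 2 * 𝓓.card := by
  choose! f hf𝓘 hfM using fun m (hm : m ∈ M) ↦
    exists_inter_eq_singleton_of_minimal_hitting hhit hmin hm
  have hself (m : ℤ) (hm : m ∈ M) : m ∈ f m := (mem_inter.mp (hfM m hm ▸ mem_singleton_self m)).2
  have hprivate (m : ℤ) (hm : m ∈ M) (x : ℤ) (hx : x ∈ M) (hxf : x ∈ f m) : x = m :=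
    mem_singleton.mp (hfM m hm ▸ mem_inter.mpr ⟨hx, hxf⟩)
  have hconn (m : ℤ) (hm : m ∈ M) : (f m : Set ℤ).OrdConnected := by
    obtain ⟨a, b, -, hab⟩ := hI _ (hf𝓘 m hm)
    rw [hab, coe_Icc]
    exact Set.ordConnected_Icc
  obtain ⟨S, hSM, hcard, hsep⟩ := M.exists_subset_card_ge_half_separated
  have hdisj (s : ℤ) (hs : s ∈ S) (t : ℤ) (ht : t ∈ S) (hst : s < t) : Disjoint (f s) (f t) := by
    obtain ⟨p, hp, hsp, hpt⟩ := hsep s hs t ht hst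
    rw [← disjoint_coe]
    exact (hconn s (hSM hs)).disjoint_of_notMem_of_lt_of_lt (hconn t (hSM ht))
      (hself s (hSM hs)) (hself t (hSM ht)) (fun h ↦ hsp.ne' (hprivate s (hSM hs) p hp h))
      (fun h ↦ hpt.ne (hprivate t (hSM ht) p hp h)) hsp hpt
  have hinj : Set.InjOn f S := fun s hs t ht hst ↦
    hprivate t (hSM ht) s (hSM hs) (hst ▸ hself s (hSM hs))
  refine ⟨S.image f, image_subset_iff.mpr fun s hs ↦ hf𝓘 s (hSM hs), ?_, ?_⟩
  · simp only [mem_image]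
    rintro _ ⟨s, hs, rfl⟩ _ ⟨t, ht, rfl⟩ hne
    rcases lt_trichotomy s t with h | rfl | h
    · exact hdisj s hs t ht h
    · exact absurd rfl hne
    · exact (hdisj t ht s hs h).symm
  · rw [card_image_of_injOn hinj]
    omega
end

section
/- Let 𝓘 be a finite family of integer intervals, let M ⊆ ℤ be a finite minimal hitting set for 𝓘, and let y : ℤ → ℝ be nonnegative with finite support such that ∑_{i ∈ I} y(i) ≥ 1 for every I ∈ 𝓘. Then |M| ≤ 2 ∑_{i ∈ ℤ} y(i). -/
/-!
Minimality gives every `m ∈ M` a private interval `P m ∈ 𝓘` with `M ∩ P m = {m}`. If a point `i`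
lies in the private intervals of `m < m'`, then `m < i < m'`: otherwise convexity would put `m'`
into `P m` or `m` into `P m'`. Hence no point lies in three private intervals, and
`|M| ≤ ∑ₘ ∑_{i ∈ P m} y i ≤ 2 ∑ᵢ y i`.
-/

open Finset

theorem exists_private_of_minimal_hitting {α : Type*} [DecidableEq α] {𝓘 : Finset (Finset α)}
    {M : Finset α} (hhit : ∀ I ∈ 𝓘, (M ∩ I).Nonempty)
    (hmin : ∀ M' : Finset α, M' ⊂ M → ¬ (∀ I ∈ 𝓘, (M' ∩ I).Nonempty)) :
    ∃ P : α → Finset α, ∀ m ∈ M, P m ∈ 𝓘 ∧ m ∈ P m ∧ ∀ m' ∈ M, m' ∈ P m → m' = m := by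
  have hpriv : ∀ m ∈ M, ∃ I ∈ 𝓘, m ∈ I ∧ ∀ m' ∈ M, m' ∈ I → m' = m := by
    intro m hm
    obtain ⟨I, hI, hmiss⟩ : ∃ I ∈ 𝓘, ¬ (M.erase m ∩ I).Nonempty := by
      simpa using hmin _ (erase_ssubset hm)
    have honly : ∀ m' ∈ M, m' ∈ I → m' = m := fun m' hm' hm'I => by
      by_contra hne
      exact hmiss ⟨m', mem_inter.2 ⟨mem_erase.2 ⟨hne, hm'⟩, hm'I⟩⟩
    obtain ⟨m', hm'⟩ := hhit I hI
    obtain ⟨hm'M, hm'I⟩ := mem_inter.1 hm'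
    exact ⟨I, hI, honly m' hm'M hm'I ▸ hm'I, honly⟩
  choose! P hP using hpriv
  exact ⟨P, hP⟩

theorem Set.OrdConnected.lt_of_lt_of_notMem {α : Type*} [LinearOrder α] {s : Set α}
    (hs : s.OrdConnected) {i m m' : α} (hi : i ∈ s) (hm : m ∈ s) (hm' : m' ∉ s) (h : m < m') :
    i < m' :=
  lt_of_not_ge fun hle => hm' (hs.out hm hi ⟨h.le, hle⟩)

theorem Set.OrdConnected.lt_of_notMem_of_lt {α : Type*} [LinearOrder α] {s : Set α}
    (hs : s.OrdConnected) {i m m' : α} (hi : i ∈ s) (hm' : m' ∈ s) (hm : m ∉ s) (h : m < m') :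
    m < i :=
  lt_of_not_ge fun hle => hm (hs.out hi hm' ⟨hle, h.le⟩)

theorem Finset.card_le_two_of_forall_lt_lt {α : Type*} [LinearOrder α] {S : Finset α} {i : α}
    (h : ∀ m ∈ S, ∀ m' ∈ S, m < m' → m < i ∧ i < m') : #S ≤ 2 := by
  have hle : #{m ∈ S | m ≤ i} ≤ 1 := card_le_one.2 fun m hm m' hm' => by
    simp only [mem_filter] at hm hm'
    by_contra hne
    rcases lt_or_gt_of_ne hne with hlt | hlt
    · exact (h m hm.1 m' hm'.1 hlt).2.not_ge hm'.2
    · exact (h m' hm'.1 m hm.1 hlt).2.not_ge hm.2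
  have hgt : #{m ∈ S | ¬ m ≤ i} ≤ 1 := card_le_one.2 fun m hm m' hm' => by
    simp only [mem_filter, not_le] at hm hm'
    by_contra hne
    rcases lt_or_gt_of_ne hne with hlt | hlt
    · exact (h m hm.1 m' hm'.1 hlt).1.not_gt hm.2
    · exact (h m' hm'.1 m hm.1 hlt).1.not_gt hm'.2
  rw [← card_filter_add_card_filter_not (· ≤ i)]
  omega

theorem card_filter_mem_private_le_two {α : Type*} [LinearOrder α] {M : Finset α}
    {P : α → Finset α} (hconv : ∀ m ∈ M, (P m : Set α).OrdConnected)
    (hpriv : ∀ m ∈ M, m ∈ P m ∧ ∀ m' ∈ M, m' ∈ P m → m' = m) (i : α) :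
    #{m ∈ M | i ∈ P m} ≤ 2 := by
  refine card_le_two_of_forall_lt_lt (i := i) fun m hm m' hm' hlt => ?_
  simp only [mem_filter] at hm hm'
  have hm'P : m' ∉ P m := fun h => hlt.ne' ((hpriv m hm.1).2 m' hm'.1 h)
  have hmP : m ∉ P m' := fun h => hlt.ne ((hpriv m' hm'.1).2 m hm.1 h)
  exact ⟨(hconv m' hm'.1).lt_of_notMem_of_lt hm'.2 (hpriv m' hm'.1).1 hmP hlt,
    (hconv m hm.1).lt_of_lt_of_notMem hm.2 (hpriv m hm.1).1 hm'P hlt⟩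

theorem sum_sum_le_mul_finsum {ι α R : Type*} [DecidableEq α] [CommSemiring R] [PartialOrder R]
    [IsOrderedRing R] (M : Finset ι) (P : ι → Finset α) {k : ℕ}
    (hk : ∀ a, #{m ∈ M | a ∈ P m} ≤ k) {y : α → R} (hy : ∀ a, 0 ≤ y a)
    (hfin : (Function.support y).Finite) :
    ∑ m ∈ M, ∑ a ∈ P m, y a ≤ k * ∑ᶠ a, y a := by
  classical
  set T := M.biUnion P ∪ hfin.toFinset
  rw [finsum_eq_sum_of_support_subset y (s := T) (by simp [T])]
  calc ∑ m ∈ M, ∑ a ∈ P m, y a = ∑ a ∈ T, ∑ m ∈ M with a ∈ P m, y a :=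
        sum_comm' fun m a => by
          simp only [T, mem_union, mem_biUnion, mem_filter]
          exact ⟨fun h => ⟨h, Or.inl ⟨m, h⟩⟩, And.left⟩
    _ = ∑ a ∈ T, #{m ∈ M | a ∈ P m} * y a := by simp only [sum_const, nsmul_eq_mul]
    _ ≤ ∑ a ∈ T, k * y a := by gcongr with a; exacts [hy a, hk a]
    _ = k * ∑ a ∈ T, y a := (mul_sum _ _ _).symm

theorem stmt_4 (𝓘 : Finset (Finset ℤ))
    (hI : ∀ I ∈ 𝓘, ∃ a b : ℤ, a ≤ b ∧ I = Finset.Icc a b)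
    (M : Finset ℤ)
    (hhit : ∀ I ∈ 𝓘, (M ∩ I).Nonempty)
    (hmin : ∀ M' : Finset ℤ, M' ⊂ M → ¬ (∀ I ∈ 𝓘, (M' ∩ I).Nonempty))
    (y : ℤ → ℝ) (hy : ∀ i, 0 ≤ y i) (hfin : (Function.support y).Finite)
    (hcov : ∀ I ∈ 𝓘, 1 ≤ ∑ i ∈ I, y i) :
    (M.card : ℝ) ≤ 2 * ∑ᶠ i : ℤ, y i := by
  obtain ⟨P, hP⟩ := exists_private_of_minimal_hitting hhit hmin
  have hconv : ∀ m ∈ M, (P m : Set ℤ).OrdConnected := fun m hm => by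
    obtain ⟨a, b, -, hab⟩ := hI _ (hP m hm).1
    rw [hab, coe_Icc]
    exact Set.ordConnected_Icc
  have hcount := card_filter_mem_private_le_two hconv fun m hm => (hP m hm).2
  calc (M.card : ℝ) = ∑ m ∈ M, 1 := by simp
    _ ≤ ∑ m ∈ M, ∑ i ∈ P m, y i := sum_le_sum fun m hm => hcov _ (hP m hm).1
    _ ≤ 2 * ∑ᶠ i : ℤ, y i := by exact_mod_cast sum_sum_le_mul_finsum M P hcount hy hfin
end

section
/- For every natural number k ≥ 4 that is divisible by 4, there exist n ≥ 1, a request sequence r : {0,…,n−1} → ℤ in the line metric (dist(x,y) = |x − y|), and a start point x₀ ∈ ℤ such that: (a) there exists a k-feasible schedule for r from x₀ of cost at most 2^k − 1; and (b) every (k/4)-feasible schedule for r from x₀ has cost at least (k/4)·2^k. -/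
/-- A schedule for `n` requests is a permutation of `{0,…,n−1}`:
`σ t` is the input index of the request served at step `t`. -/
def IsSchedule (n : ℕ) (σ : ℕ → ℕ) : Prop :=
  Set.BijOn σ {t | t < n} {t | t < n}

/-- A schedule is `κ`-feasible if `σ(t) ≤ t + κ − 1` for every step `t`:
the server reads requests in input order into a buffer of capacity `κ`. -/
def IsFeasible (n κ : ℕ) (σ : ℕ → ℕ) : Prop :=
  ∀ t < n, σ t ≤ t + κ - 1

/-- The travel cost of a schedule `σ` for requests `r` starting at `x₀`,
with respect to the distance function `d`. -/
noncomputable def schedCost {X : Type} (d : X → X → ℝ) (n : ℕ) (r : ℕ → X)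
    (x₀ : X) (σ : ℕ → ℕ) : ℝ :=
  d x₀ (r (σ 0)) + ∑ t ∈ Finset.range (n - 1), d (r (σ t)) (r (σ (t + 1)))

/-- The evenly-spaced line metric on `ℤ`. -/
noncomputable def lineDist (x y : ℤ) : ℝ := |(x : ℝ) - (y : ℝ)|

/-!
The requests come in `2 ^ k` chunks of length `2k - 1`. Chunk `c` ends with a block of `k` copies
of the point `c`; its first `k - 1` slots hold *teasers*: for each dyadic interval
`[c, c + 2 ^ (s + 2))` with left end `c`, slot `s` requests the midpoint `c + 2 ^ (s + 1)`, and the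
other slots request `c`. No request has more than `k - 1` earlier requests to its right, so with
buffer `k` the stable sort by position is feasible and costs one sweep from `0` to `2 ^ k - 1`.

With buffer `κ ≤ k / 4` every block must be served while the buffer is reading it, so the blocks
are visited in order. A teaser aimed `2 ^ (s + 1)` chunks ahead either waits about
`(2k - 1)(2 ^ (s + 1) - 1)` steps in the buffer, or is fetched by an excursion during some gap
between two consecutive block visits. The teasers fetched in one gap lie at doubling distances, so
the excursion to the farthest of them pays for all. The delays `t + κ - 1 - σ t` of a feasible
schedule sum to exactly `(κ - 1) n`, so the total demand `(k - 2) 2 ^ (k - 1) + 1` is at most the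
travel plus `(κ - 1) 2 ^ k`, which forces travel `> κ 2 ^ k`.
-/

open Finset

def trajectory {X : Type} (r : ℕ → X) (x₀ : X) (σ : ℕ → ℕ) : ℕ → X
  | 0 => x₀
  | u + 1 => r (σ u)

theorem schedCost_eq_sum_trajectory {X : Type} (d : X → X → ℝ) {n : ℕ} (hn : 0 < n)
    (r : ℕ → X) (x₀ : X) (σ : ℕ → ℕ) :
    schedCost d n r x₀ σ =
      ∑ u ∈ range n, d (trajectory r x₀ σ u) (trajectory r x₀ σ (u + 1)) := by
  obtain ⟨m, rfl⟩ := Nat.exists_eq_add_one_of_ne_zero hn.ne'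
  rw [sum_range_succ']
  simp [schedCost, trajectory, add_comm]

theorem schedCost_lineDist_natCast {n : ℕ} (hn : 0 < n) (r : ℕ → ℕ) (x₀ : ℕ) (σ : ℕ → ℕ) :
    schedCost lineDist n (fun i => (r i : ℤ)) x₀ σ =
      ∑ u ∈ range n, dist ((trajectory r x₀ σ u : ℕ) : ℝ) (trajectory r x₀ σ (u + 1) : ℕ) := by
  rw [schedCost_eq_sum_trajectory lineDist hn]
  refine sum_congr rfl fun u _ => ?_
  cases u <;> simp [trajectory, lineDist, Real.dist_eq]

theorem sum_range_dist_of_le {P : ℕ → ℝ} {n : ℕ} (hP : ∀ u < n, P u ≤ P (u + 1)) :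
    ∑ u ∈ range n, dist (P u) (P (u + 1)) = P n - P 0 := by
  rw [← sum_range_sub]
  refine sum_congr rfl fun u hu => ?_
  rw [Real.dist_eq, abs_sub_comm, abs_of_nonneg (sub_nonneg.2 (hP u (mem_range.1 hu)))]

theorem two_mul_sub_le_sum_Ico_dist {P : ℕ → ℝ} {a m e : ℕ} {x : ℝ} (ham : a ≤ m) (hme : m ≤ e)
    (ha : P a ≤ x) (he : P e = x) :
    2 * (P m - x) ≤ ∑ u ∈ Ico a e, dist (P u) (P (u + 1)) := by
  rw [← sum_Ico_consecutive _ ham hme]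
  have hout := dist_le_Ico_sum_dist P ham
  have hback := dist_le_Ico_sum_dist P hme
  rw [Real.dist_eq] at hout hback
  rw [he] at hback
  have := neg_abs_le (P a - P m)
  have := le_abs_self (P m - x)
  linarith

theorem two_pow_add_two (n : ℕ) : 2 ^ (n + 2) = 2 ^ (n + 1) + 2 ^ (n + 1) :=
  Nat.two_pow_succ (n + 1)

theorem sum_range_sum_Ico_eq {M : Type*} [AddCommMonoid M] (f : ℕ → M) {b : ℕ → ℕ}
    (h0 : b 0 = 0) {m : ℕ} (hb : ∀ g < m, b g ≤ b (g + 1)) :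
    ∑ g ∈ range m, ∑ u ∈ Ico (b g) (b (g + 1)), f u = ∑ u ∈ range (b m), f u := by
  induction m with
  | zero => simp [h0]
  | succ m ih =>
    rw [sum_range_succ, ih fun g hg => hb g (by omega),
      sum_range_add_sum_Ico _ (hb m (by omega))]

theorem sum_le_two_mul_of_doubling {ι : Type*} [DecidableEq ι] (c : ι → ℕ) (F : Finset ι)
    (hc : ∀ a ∈ F, ∀ b ∈ F, a ≠ b → 2 * c a ≤ c b ∨ 2 * c b ≤ c a) {M : ℕ}
    (hM : ∀ a ∈ F, c a ≤ M) : ∑ a ∈ F, c a ≤ 2 * M := by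
  induction F using Finset.induction_on_max_value c generalizing M with
  | empty => simp
  | insert a F ha hmax ih =>
    rw [sum_insert ha]
    have hhalf : ∀ x ∈ F, 2 * c x ≤ c a := fun x hx => by
      have := hmax x hx
      rcases hc x (mem_insert_of_mem hx) a (mem_insert_self a F) (by rintro rfl; exact ha hx)
        with h | h <;> omega
    have := ih (fun x hx y hy => hc x (mem_insert_of_mem hx) y (mem_insert_of_mem hy))
      (M := c a / 2) fun x hx => by have := hhalf x hx; omega
    have := hM a (mem_insert_self a F)
    omega

namespace IsSchedule

variable {n : ℕ} {σ : ℕ → ℕ}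

theorem sum_apply (hσ : IsSchedule n σ) : ∑ t ∈ range n, σ t = ∑ t ∈ range n, t :=
  sum_nbij σ (fun _ ht => by simpa using hσ.mapsTo (by simpa using ht))
    (by rw [coe_range]; exact hσ.injOn) (by rw [coe_range]; exact hσ.surjOn) fun _ _ => rfl

theorem exists_serveTime (hσ : IsSchedule n σ) :
    ∃ serve : ℕ → ℕ, ∀ i < n, serve i < n ∧ σ (serve i) = i := by
  choose! serve hserve using fun i (hi : i < n) => (hσ.surjOn hi : ∃ t, t < n ∧ σ t = i)
  exact ⟨serve, hserve⟩

theorem exists_le_le_apply (hσ : IsSchedule n σ) {m : ℕ} (hm : m < n) : ∃ t ≤ m, m ≤ σ t := by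
  by_contra! h
  obtain ⟨a, ha, b, hb, hab, he⟩ := exists_ne_map_eq_of_card_lt_of_maps_to
    (s := range (m + 1)) (t := range m) (f := σ) (by simp)
    fun t ht => by simpa using h t (by simpa [Nat.lt_succ_iff] using ht)
  rw [mem_range] at ha hb
  exact hab (hσ.injOn (show a < n by omega) (show b < n by omega) he)

end IsSchedule

namespace IsFeasible

variable {n κ : ℕ} {σ : ℕ → ℕ}

theorem sum_tsub_eq (hf : IsFeasible n κ σ) (hσ : IsSchedule n σ) :
    ∑ t ∈ range n, (t + (κ - 1) - σ t) = (κ - 1) * n := by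
  have hterm : ∀ t ∈ range n, t + (κ - 1) - σ t + σ t = t + (κ - 1) := fun t ht => by
    have := hf t (mem_range.1 ht)
    omega
  have hsplit : ∑ t ∈ range n, (t + (κ - 1) - σ t) + ∑ t ∈ range n, σ t =
      ∑ t ∈ range n, t + (κ - 1) * n := by
    rw [← sum_add_distrib, sum_congr rfl hterm, sum_add_distrib, sum_const, card_range,
      smul_eq_mul, mul_comm]
  rw [hσ.sum_apply] at hsplit
  omega

theorem sum_serve_tsub_le (hf : IsFeasible n κ σ) (hσ : IsSchedule n σ) {serve : ℕ → ℕ}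
    (hserve : ∀ i < n, serve i < n ∧ σ (serve i) = i) {S : Finset ℕ} (hS : S ⊆ range n) :
    ∑ i ∈ S, (serve i + (κ - 1) - i) ≤ (κ - 1) * n := by
  have hsub : ∀ i ∈ S, i < n := fun i hi => mem_range.1 (hS hi)
  calc ∑ i ∈ S, (serve i + (κ - 1) - i)
      = ∑ t ∈ S.image serve, (t + (κ - 1) - σ t) := by
        rw [sum_image fun a ha b hb hab => by
          rw [← (hserve a (hsub a ha)).2, ← (hserve b (hsub b hb)).2, hab]]
        exact sum_congr rfl fun i hi => by rw [(hserve i (hsub i hi)).2]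
    _ ≤ ∑ t ∈ range n, (t + (κ - 1) - σ t) :=
        sum_le_sum_of_subset fun t ht => by
          obtain ⟨i, hi, rfl⟩ := mem_image.1 ht
          exact mem_range.2 (hserve i (hsub i hi)).1
    _ = (κ - 1) * n := hf.sum_tsub_eq hσ

end IsFeasible

section SortSchedule

variable {α : Type*} [LinearOrder α] {n κ : ℕ} {r : ℕ → α} {t t' : ℕ}

def sortSchedule (n : ℕ) (r : ℕ → α) (t : ℕ) : ℕ :=
  if h : t < n then Tuple.sort (fun i : Fin n => r i) ⟨t, h⟩ else t

theorem sortSchedule_of_lt (h : t < n) :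
    sortSchedule n r t = Tuple.sort (fun i : Fin n => r i) ⟨t, h⟩ :=
  dif_pos h

theorem isSchedule_sortSchedule : IsSchedule n (sortSchedule n r) := by
  refine ⟨fun t ht => ?_, fun t ht t' ht' he => ?_, fun i hi => ?_⟩
  · change sortSchedule n r t < n
    rw [sortSchedule_of_lt ht]
    exact Fin.is_lt _
  · rw [sortSchedule_of_lt ht, sortSchedule_of_lt ht'] at he
    simpa using (Tuple.sort _).injective (Fin.ext he)
  · refine ⟨(Tuple.sort (fun i : Fin n => r i)).symm ⟨i, hi⟩, Fin.is_lt _, ?_⟩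
    rw [sortSchedule_of_lt (Fin.is_lt _)]
    simp

theorem sortSchedule_mono (h : t ≤ t') (ht' : t' < n) :
    r (sortSchedule n r t) ≤ r (sortSchedule n r t') := by
  rw [sortSchedule_of_lt (h.trans_lt ht'), sortSchedule_of_lt ht']
  exact Tuple.monotone_sort (fun i : Fin n => r i) (Fin.mk_le_mk.2 h)

theorem lt_of_sortSchedule_lt (ht : t < n) (ht' : t' < n)
    (hlt : sortSchedule n r t' < sortSchedule n r t)
    (hle : r (sortSchedule n r t') ≤ r (sortSchedule n r t)) : t' < t := by
  by_contra! h
  rcases h.lt_or_eq with h | rfl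
  · set f : Fin n → α := fun i => r i
    have hstable := (Tuple.eq_sort_iff (f := f)).1 rfl |>.2 ⟨t, ht⟩ ⟨t', ht'⟩ h
    rw [sortSchedule_of_lt ht, sortSchedule_of_lt ht'] at hlt hle
    exact hlt.not_gt (hstable (le_antisymm (Tuple.monotone_sort f (Fin.mk_le_mk.2 h.le)) hle))
  · exact lt_irrefl _ hlt

theorem isFeasible_sortSchedule
    (hbad : ∀ i < n, #{i' ∈ range i | r i < r i'} < κ) :
    IsFeasible n κ (sortSchedule n r) := by
  intro t ht
  have hσ : IsSchedule n (sortSchedule n r) := isSchedule_sortSchedule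
  obtain ⟨serve, hserve⟩ := hσ.exists_serveTime
  set i := sortSchedule n r t
  have hi : i < n := hσ.mapsTo ht
  have hgood : #{i' ∈ range i | ¬ r i < r i'} ≤ t := by
    refine (card_le_card_of_injOn serve (fun i' hi' => ?_) fun a ha b hb hab => ?_).trans
      (card_range t).le
    · simp only [coe_filter, mem_range, not_lt] at hi'
      obtain ⟨hsn, hsi⟩ := hserve i' (hi'.1.trans hi)
      rw [← hsi] at hi'
      exact mem_range.2 (lt_of_sortSchedule_lt ht hsn hi'.1 hi'.2)
    · simp only [coe_filter, mem_range] at ha hb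
      rw [← (hserve a (ha.1.trans hi)).2, ← (hserve b (hb.1.trans hi)).2, hab]
  have hsplit := card_filter_add_card_filter_not (s := range i) (fun i' => r i < r i')
  rw [card_range] at hsplit
  have := hbad i hi
  omega

end SortSchedule

namespace HardInstance

def chunkLen (k : ℕ) : ℕ := 2 * k - 1

def hardLen (k : ℕ) : ℕ := chunkLen k * 2 ^ k

def IsTeaser (k i : ℕ) : Prop :=
  i % chunkLen k + 2 ≤ k ∧ 2 ^ (i % chunkLen k + 2) ∣ i / chunkLen k

instance (k : ℕ) : DecidablePred (IsTeaser k) := fun _ => by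
  unfold IsTeaser
  infer_instance

def hardReq (k i : ℕ) : ℕ :=
  if IsTeaser k i then i / chunkLen k + 2 ^ (i % chunkLen k + 1) else i / chunkLen k

def teasers (k : ℕ) : Finset ℕ := {i ∈ range (hardLen k) | IsTeaser k i}

variable {k κ : ℕ} {σ visit serve : ℕ → ℕ} {g : ℕ}

theorem hardLen_pos (hk : 1 ≤ k) : 0 < hardLen k :=
  Nat.mul_pos (by unfold chunkLen; omega) (by positivity)

theorem hardReq_of_isTeaser {i : ℕ} (hi : IsTeaser k i) :
    hardReq k i = i / chunkLen k + 2 ^ (i % chunkLen k + 1) :=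
  if_pos hi

theorem hardReq_of_not_isTeaser {i : ℕ} (hi : ¬ IsTeaser k i) : hardReq k i = i / chunkLen k :=
  if_neg hi

theorem div_le_hardReq (i : ℕ) : i / chunkLen k ≤ hardReq k i := by
  unfold hardReq
  split_ifs
  exacts [Nat.le_add_right _ _, le_rfl]

theorem hardReq_block {c s : ℕ} (hs : k - 1 ≤ s) (hsL : s < chunkLen k) :
    hardReq k (chunkLen k * c + s) = c := by
  have hL : 0 < chunkLen k := by omega
  have hnot : ¬ IsTeaser k (chunkLen k * c + s) := by
    rw [IsTeaser, Nat.mul_add_mod, Nat.mod_eq_of_lt hsL]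
    omega
  rw [hardReq_of_not_isTeaser hnot, Nat.mul_add_div hL, Nat.div_eq_of_lt hsL, add_zero]

theorem hardReq_lt_two_pow {i : ℕ} (hi : i < hardLen k) : hardReq k i < 2 ^ k := by
  have hc : i / chunkLen k < 2 ^ k := Nat.div_lt_of_lt_mul hi
  by_cases ht : IsTeaser k i
  · obtain ⟨hs, hdvd⟩ := ht
    have hle := Nat.le_of_lt_add_of_dvd (b := 2 ^ k) (by omega) (dvd_add hdvd dvd_rfl)
      (pow_dvd_pow 2 hs)
    rw [hardReq_of_isTeaser ⟨hs, hdvd⟩]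
    have := two_pow_add_two (i % chunkLen k)
    omega
  · rwa [hardReq_of_not_isTeaser ht]

theorem hardReq_lt_div_of_mod_eq {a b : ℕ} (ha : IsTeaser k a) (hb : IsTeaser k b)
    (hmod : a % chunkLen k = b % chunkLen k) (hdiv : a / chunkLen k < b / chunkLen k) :
    hardReq k a < b / chunkLen k := by
  have hb' := hb.2
  rw [← hmod] at hb'
  have hle := Nat.le_of_lt_add_of_dvd (by omega) (dvd_add ha.2 dvd_rfl) hb'
  rw [hardReq_of_isTeaser ha]
  have := two_pow_add_two (a % chunkLen k)
  omega

theorem add_two_pow_le_hardReq {a b : ℕ} (ha : IsTeaser k a) (hb : IsTeaser k b)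
    (hmod : a % chunkLen k < b % chunkLen k) (hdiv : a / chunkLen k < hardReq k b) :
    a / chunkLen k + 2 ^ (a % chunkLen k + 2) ≤ hardReq k b := by
  rw [hardReq_of_isTeaser hb] at hdiv ⊢
  refine Nat.le_of_lt_add_of_dvd (by omega) (dvd_add ha.2 dvd_rfl) (dvd_add ?_ ?_)
  · exact (pow_dvd_pow 2 (by omega)).trans hb.2
  · exact pow_dvd_pow 2 (by omega)

theorem card_filter_hardReq_lt (hk : 1 ≤ k) (i : ℕ) :
    #{i' ∈ range i | hardReq k i < hardReq k i'} < k := by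
  have habove : ∀ i' < i, hardReq k i < hardReq k i' → IsTeaser k i' := fun i' hi' h => by
    by_contra ht
    rw [hardReq_of_not_isTeaser ht] at h
    exact h.not_ge ((Nat.div_le_div_right hi'.le).trans (div_le_hardReq i))
  have hcross : ∀ a < i, ∀ b < i, IsTeaser k a → IsTeaser k b →
      a % chunkLen k = b % chunkLen k → a / chunkLen k < b / chunkLen k →
      hardReq k a ≤ hardReq k i := fun a _ b hb ha' hb' hmod hdiv =>
    (hardReq_lt_div_of_mod_eq ha' hb' hmod hdiv).le.trans
      ((Nat.div_le_div_right hb.le).trans (div_le_hardReq i))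
  calc #{i' ∈ range i | hardReq k i < hardReq k i'}
      ≤ #(range (k - 1)) := by
        refine card_le_card_of_injOn (· % chunkLen k) (fun i' hi' => ?_) fun a ha b hb hab => ?_
        · simp only [coe_filter, mem_range] at hi'
          have := (habove i' hi'.1 hi'.2).1
          simp only [coe_range, Set.mem_Iio]
          omega
        · simp only [coe_filter, mem_range] at ha hb
          have ha' := habove a ha.1 ha.2
          have hb' := habove b hb.1 hb.2
          rcases lt_trichotomy (a / chunkLen k) (b / chunkLen k) with h | h | h
          · exact absurd (hcross a ha.1 b hb.1 ha' hb' hab h) ha.2.not_ge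
          · exact Nat.ext_div_mod h hab
          · exact absurd (hcross b hb.1 a ha.1 hb' ha' hab.symm h) hb.2.not_ge
    _ < k := by rw [card_range]; omega

theorem two_mul_hardReq_sub_le {a b g : ℕ} (ha : IsTeaser k a) (hb : IsTeaser k b)
    (hmod : a % chunkLen k < b % chunkLen k) (hag : a / chunkLen k ≤ g) (hgb : g < hardReq k b) :
    2 * (hardReq k a - g) ≤ hardReq k b - g := by
  have := add_two_pow_le_hardReq ha hb hmod (by omega)
  have := two_pow_add_two (a % chunkLen k)
  rw [hardReq_of_isTeaser ha]
  omega

theorem teaser_doubling {a b g : ℕ} (ha : IsTeaser k a) (hb : IsTeaser k b) (hab : a ≠ b)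
    (hag : a / chunkLen k ≤ g) (hga : g < hardReq k a)
    (hbg : b / chunkLen k ≤ g) (hgb : g < hardReq k b) :
    2 * (hardReq k a - g) ≤ hardReq k b - g ∨ 2 * (hardReq k b - g) ≤ hardReq k a - g := by
  rcases lt_trichotomy (a % chunkLen k) (b % chunkLen k) with h | h | h
  · exact Or.inl (two_mul_hardReq_sub_le ha hb h hag hgb)
  · exfalso
    rcases lt_trichotomy (a / chunkLen k) (b / chunkLen k) with h' | h' | h'
    · have := hardReq_lt_div_of_mod_eq ha hb h h'
      omega
    · exact hab (Nat.ext_div_mod h' h)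
    · have := hardReq_lt_div_of_mod_eq hb ha h.symm h'
      omega
  · exact Or.inr (two_mul_hardReq_sub_le hb ha h hbg hga)

theorem lt_sum_two_pow_mul_two_pow_sub_one (hk : 2 ≤ k) :
    (k - 2) * 2 ^ (k - 1) < ∑ e ∈ range (k - 1), 2 ^ e * (2 ^ (k - 1 - e) - 1) := by
  have hterm : ∀ e ∈ range (k - 1), 2 ^ e * (2 ^ (k - 1 - e) - 1) + 2 ^ e = 2 ^ (k - 1) :=
    fun e he => by
      have he' := mem_range.1 he
      rw [Nat.mul_sub, mul_one, ← pow_add, show e + (k - 1 - e) = k - 1 by omega]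
      exact Nat.sub_add_cancel (Nat.pow_le_pow_right two_pos (by omega))
  have hsum := sum_congr rfl hterm
  rw [sum_add_distrib, sum_const, card_range, smul_eq_mul] at hsum
  have hgeom : ∑ e ∈ range (k - 1), 2 ^ e < 2 ^ (k - 1) :=
    Nat.geomSum_lt le_rfl fun e he => mem_range.1 he
  have : (k - 1) * 2 ^ (k - 1) = (k - 2) * 2 ^ (k - 1) + 2 ^ (k - 1) := by
    rw [show k - 1 = k - 2 + 1 by omega, add_one_mul]
  omega

/-- Slot `k - 2 - e` holds exactly `2 ^ e` teasers; this is the `m`-th of them. -/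
def slotTeaser (k e m : ℕ) : ℕ := chunkLen k * (2 ^ (k - e) * m) + (k - 2 - e)

theorem slotTeaser_mod {e m : ℕ} (he : e < k - 1) : slotTeaser k e m % chunkLen k = k - 2 - e := by
  rw [slotTeaser, Nat.mul_add_mod, Nat.mod_eq_of_lt (by unfold chunkLen; omega)]

theorem slotTeaser_div {e m : ℕ} (he : e < k - 1) :
    slotTeaser k e m / chunkLen k = 2 ^ (k - e) * m := by
  rw [slotTeaser, Nat.mul_add_div (by unfold chunkLen; omega),
    Nat.div_eq_of_lt (by unfold chunkLen; omega), add_zero]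

theorem isTeaser_slotTeaser {e m : ℕ} (he : e < k - 1) : IsTeaser k (slotTeaser k e m) := by
  rw [IsTeaser, slotTeaser_mod he, slotTeaser_div he, show k - 2 - e + 2 = k - e by omega]
  exact ⟨by omega, dvd_mul_right _ _⟩

theorem slotTeaser_mem_teasers {e m : ℕ} (he : e < k - 1) (hm : m < 2 ^ e) :
    slotTeaser k e m ∈ teasers k := by
  refine mem_filter.2 ⟨mem_range.2 ?_, isTeaser_slotTeaser he⟩
  have hchunk : 2 ^ (k - e) * m + 1 ≤ 2 ^ k :=
    calc 2 ^ (k - e) * m + 1 ≤ 2 ^ (k - e) * m + 2 ^ (k - e) :=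
          Nat.add_le_add_left Nat.one_le_two_pow _
      _ = 2 ^ (k - e) * (m + 1) := by ring
      _ ≤ 2 ^ (k - e) * 2 ^ e := Nat.mul_le_mul_left _ hm
      _ = 2 ^ k := by rw [← pow_add, Nat.sub_add_cancel (by omega)]
  calc slotTeaser k e m < chunkLen k * (2 ^ (k - e) * m) + chunkLen k := by
        unfold slotTeaser chunkLen
        omega
    _ = chunkLen k * (2 ^ (k - e) * m + 1) := by ring
    _ ≤ chunkLen k * 2 ^ k := Nat.mul_le_mul_left _ hchunk

theorem hardReq_slotTeaser_sub {e m : ℕ} (he : e < k - 1) :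
    hardReq k (slotTeaser k e m) - slotTeaser k e m / chunkLen k - 1 = 2 ^ (k - 1 - e) - 1 := by
  rw [hardReq_of_isTeaser (isTeaser_slotTeaser he), slotTeaser_mod he,
    show k - 2 - e + 1 = k - 1 - e by omega]
  omega

def totalDemand (k : ℕ) : ℕ := ∑ i ∈ teasers k, (hardReq k i - i / chunkLen k - 1)

theorem lt_totalDemand (hk : 2 ≤ k) : (k - 2) * 2 ^ (k - 1) < totalDemand k := by
  set S := (range (k - 1)).sigma fun e => range (2 ^ e)
  have hS : ∀ x ∈ S, x.1 < k - 1 ∧ x.2 < 2 ^ x.1 := fun x hx => by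
    simpa [S] using hx
  have hinj : Set.InjOn (fun x : Σ _ : ℕ, ℕ => slotTeaser k x.1 x.2) S := by
    rintro ⟨e, m⟩ hx ⟨e', m'⟩ hx' h
    have he : e < k - 1 := (hS _ hx).1
    have he' : e' < k - 1 := (hS _ hx').1
    have hmod := congrArg (· % chunkLen k) h
    have hdiv := congrArg (· / chunkLen k) h
    simp only [slotTeaser_mod he, slotTeaser_mod he', slotTeaser_div he,
      slotTeaser_div he'] at hmod hdiv
    obtain rfl : e = e' := by omega
    rw [Nat.mul_left_cancel (by positivity) hdiv]
  calc (k - 2) * 2 ^ (k - 1) < ∑ e ∈ range (k - 1), 2 ^ e * (2 ^ (k - 1 - e) - 1) :=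
        lt_sum_two_pow_mul_two_pow_sub_one hk
    _ = ∑ x ∈ S, (hardReq k (slotTeaser k x.1 x.2) - slotTeaser k x.1 x.2 / chunkLen k - 1) := by
        rw [sum_congr rfl fun x hx => hardReq_slotTeaser_sub (hS x hx).1, sum_sigma]
        simp
    _ ≤ totalDemand k := by
        rw [totalDemand, ← sum_image (f := fun i => hardReq k i - i / chunkLen k - 1) hinj]
        exact sum_le_sum_of_subset (image_subset_iff.2 fun x hx =>
          slotTeaser_mem_teasers (hS x hx).1 (hS x hx).2)

theorem exists_feasible_schedCost_le (hk : 1 ≤ k) :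
    ∃ σ, IsSchedule (hardLen k) σ ∧ IsFeasible (hardLen k) k σ ∧
      schedCost lineDist (hardLen k) (fun i => (hardReq k i : ℤ)) ((0 : ℕ) : ℤ) σ ≤ 2 ^ k - 1 := by
  set σ := sortSchedule (hardLen k) (hardReq k)
  have hσ : IsSchedule (hardLen k) σ := isSchedule_sortSchedule
  refine ⟨σ, hσ, isFeasible_sortSchedule fun i _ => card_filter_hardReq_lt hk i, ?_⟩
  have hmono : ∀ u < hardLen k, ((trajectory (hardReq k) 0 σ u : ℕ) : ℝ) ≤
      (trajectory (hardReq k) 0 σ (u + 1) : ℕ) := by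
    rintro (_ | u) hu
    · simp [trajectory]
    · show ((hardReq k (σ u) : ℕ) : ℝ) ≤ hardReq k (σ (u + 1))
      exact_mod_cast sortSchedule_mono (r := hardReq k) (Nat.le_succ u) hu
  have hn := hardLen_pos hk
  rw [schedCost_lineDist_natCast hn, sum_range_dist_of_le hmono,
    show hardLen k = hardLen k - 1 + 1 by omega]
  have hlast : hardReq k (σ (hardLen k - 1)) + 1 ≤ 2 ^ k :=
    hardReq_lt_two_pow (hσ.mapsTo (show hardLen k - 1 < hardLen k by omega))
  simp only [trajectory, CharP.cast_eq_zero, sub_zero]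
  have : ((hardReq k (σ (hardLen k - 1)) + 1 : ℕ) : ℝ) ≤ 2 ^ k := by exact_mod_cast hlast
  push_cast at this
  linarith

/-- `visit p` is a step serving a request at `p` while the last request read into the buffer,
`visit p + κ - 1`, lies in the block of chunk `p`. -/
def BlockVisits (k κ : ℕ) (σ visit : ℕ → ℕ) : Prop :=
  ∀ p < 2 ^ k, hardReq k (σ (visit p)) = p ∧
    chunkLen k * p + k ≤ visit p + κ ∧ visit p + κ ≤ chunkLen k * (p + 1)

theorem exists_blockVisits (hκ : 1 ≤ κ) (hκk : κ ≤ k) (hσ : IsSchedule (hardLen k) σ)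
    (hf : IsFeasible (hardLen k) κ σ) : ∃ visit, BlockVisits k κ σ visit := by
  have hvisit : ∀ p < 2 ^ k, ∃ t, hardReq k (σ t) = p ∧ chunkLen k * p + k ≤ t + κ ∧
      t + κ ≤ chunkLen k * (p + 1) := fun p hp => by
    -- one of the first `L (p + 1) - κ + 1` steps serves an index `≥ L (p + 1) - κ`, and
    -- feasibility keeps that index inside the block of chunk `p`
    set L := chunkLen k
    have hL : L = 2 * k - 1 := rfl
    have hsucc : L * (p + 1) = L * p + L := by ring
    have hM : L * (p + 1) - κ < hardLen k := by
      have : L * (p + 1) ≤ L * 2 ^ k := Nat.mul_le_mul_left _ hp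
      have : hardLen k = L * 2 ^ k := rfl
      omega
    obtain ⟨t, htM, hMt⟩ := hσ.exists_le_le_apply hM
    have hft := hf t (by omega)
    refine ⟨t, ?_, by omega, by omega⟩
    rw [show σ t = L * p + (σ t - L * p) by omega, hardReq_block (by omega) (by omega)]
  choose! visit hvisit using hvisit
  exact ⟨visit, hvisit⟩

def gapStart (visit : ℕ → ℕ) : ℕ → ℕ
  | 0 => 0
  | p + 1 => visit p + 1

def gapTeasers (k : ℕ) (visit serve : ℕ → ℕ) (g : ℕ) : Finset ℕ :=
  {i ∈ teasers k | i / chunkLen k ≤ g ∧ g < hardReq k i ∧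
    gapStart visit g ≤ serve i ∧ serve i ≤ visit g}

namespace BlockVisits

theorem gapStart_le_succ (hv : BlockVisits k κ σ visit) :
    ∀ g < 2 ^ k, gapStart visit g ≤ gapStart visit (g + 1) := by
  rintro (_ | p) hp
  · exact Nat.zero_le _
  · have := (hv p (by omega)).2.2
    have := (hv (p + 1) hp).2.1
    simp only [gapStart]
    omega

theorem gapStart_two_pow_le (hv : BlockVisits k κ σ visit) (hκ : 1 ≤ κ) :
    gapStart visit (2 ^ k) ≤ hardLen k := by
  obtain ⟨p, hp⟩ : ∃ p, 2 ^ k = p + 1 := ⟨2 ^ k - 1, by have := k.one_le_two_pow; omega⟩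
  have := (hv p (by omega)).2.2
  rw [hp, gapStart, hardLen, hp]
  omega

theorem trajectory_gapStart_le (hv : BlockVisits k κ σ visit) (hg : g ≤ 2 ^ k) :
    trajectory (hardReq k) 0 σ (gapStart visit g) ≤ g := by
  cases g with
  | zero => exact le_rfl
  | succ p =>
    show hardReq k (σ (visit p)) ≤ p + 1
    rw [(hv p (by omega)).1]
    exact Nat.le_succ p

theorem mul_sub_le_delay (hv : BlockVisits k κ σ visit) {i p : ℕ} (hi : IsTeaser k i)
    (hp : p < 2 ^ k) (hserve : visit p < serve i) :
    chunkLen k * (p - i / chunkLen k) ≤ serve i + (κ - 1) - i := by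
  have := (hv p hp).2.1
  have := Nat.div_add_mod i (chunkLen k)
  have := hi.1
  rw [Nat.mul_sub]
  omega

theorem div_le_of_serve_le (hv : BlockVisits k κ σ visit) {i : ℕ} (hdelay : i < serve i + κ)
    (hg : g < 2 ^ k) (hserve : serve i ≤ visit g) : i / chunkLen k ≤ g := by
  have := (hv g hg).2.2
  have := Nat.div_add_mod i (chunkLen k)
  exact Nat.lt_add_one_iff.1 (Nat.lt_of_mul_lt_mul_left (a := chunkLen k)
    (show chunkLen k * (i / chunkLen k) < chunkLen k * (g + 1) by omega))

end BlockVisits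

theorem gapTeasers_subset : gapTeasers k visit serve g ⊆ teasers k :=
  filter_subset _ _

theorem gapStart_le_of_forall_lt {t : ℕ} (h : ∀ g' < g, visit g' < t) : gapStart visit g ≤ t := by
  cases g with
  | zero => exact Nat.zero_le t
  | succ p => exact h p (Nat.lt_succ_self p)

theorem exists_gap {t q : ℕ} (h : t ≤ visit q) :
    ∃ g ≤ q, t ≤ visit g ∧ ∀ g' < g, visit g' < t := by
  have hex : ∃ g, t ≤ visit g := ⟨q, h⟩
  exact ⟨Nat.find hex, Nat.find_min' hex h, Nat.find_spec hex,
    fun g' hg' => not_le.1 (Nat.find_min hex hg')⟩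

def gapCharge (k : ℕ) (visit serve : ℕ → ℕ) (i : ℕ) : ℕ :=
  ∑ g ∈ range (2 ^ k), if i ∈ gapTeasers k visit serve g then hardReq k i - g else 0

theorem sub_le_gapCharge (hg : g < 2 ^ k) {i : ℕ} (hi : i ∈ gapTeasers k visit serve g) :
    hardReq k i - g ≤ gapCharge k visit serve i := by
  calc hardReq k i - g = if i ∈ gapTeasers k visit serve g then hardReq k i - g else 0 :=
        (if_pos hi).symm
    _ ≤ _ := single_le_sum (f := fun g' => if i ∈ gapTeasers k visit serve g' then
        hardReq k i - g' else 0) (fun _ _ => Nat.zero_le _) (mem_range.2 hg)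

theorem sum_gapCharge : ∑ i ∈ teasers k, gapCharge k visit serve i =
    ∑ g ∈ range (2 ^ k), ∑ i ∈ gapTeasers k visit serve g, (hardReq k i - g) := by
  unfold gapCharge
  rw [sum_comm]
  exact sum_congr rfl fun g _ => by rw [sum_ite_mem, inter_eq_right.2 gapTeasers_subset]

/-- A teaser still waiting when the block of its target is visited pays in buffer time; otherwise
it is served in some gap `g`, pays `hardReq k i - g` in travel there, and the time it waited before
that gap pays the rest. -/
theorem demand_le_gapCharge_add_delay (hv : BlockVisits k κ σ visit) {i : ℕ} (hi : i ∈ teasers k)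
    (hdelay : i < serve i + κ) :
    chunkLen k * (hardReq k i - i / chunkLen k - 1) ≤
      chunkLen k * gapCharge k visit serve i + (serve i + (κ - 1) - i) := by
  obtain ⟨hin, hti⟩ := mem_filter.1 hi
  set c := i / chunkLen k
  -- `omega` does not know on its own that a quotient of naturals is nonnegative
  have hc0 : 0 ≤ c := Nat.zero_le c
  have hq : hardReq k i < 2 ^ k := hardReq_lt_two_pow (mem_range.1 hin)
  have hcq : c < hardReq k i := by
    rw [hardReq_of_isTeaser hti]
    exact Nat.lt_add_of_pos_right (by positivity)
  by_cases hlate : visit (hardReq k i - 1) < serve i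
  · have : chunkLen k * (hardReq k i - 1 - c) ≤ serve i + (κ - 1) - i :=
      hv.mul_sub_le_delay hti (by omega) hlate
    rw [show hardReq k i - c - 1 = hardReq k i - 1 - c by omega]
    exact this.trans (Nat.le_add_left _ _)
  obtain ⟨g, hgq, hg, hbefore⟩ := exists_gap (not_lt.1 hlate)
  have hcg : c ≤ g := hv.div_le_of_serve_le hdelay (by omega) hg
  have hmem : i ∈ gapTeasers k visit serve g :=
    mem_filter.2 ⟨hi, hcg, by omega, gapStart_le_of_forall_lt hbefore, hg⟩
  have hwait : chunkLen k * (g - 1 - c) ≤ serve i + (κ - 1) - i := by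
    rcases Nat.lt_or_ge c g with h | h
    · exact hv.mul_sub_le_delay hti (by omega) (hbefore _ (by omega))
    · rw [Nat.sub_eq_zero_of_le (by omega), mul_zero]
      exact Nat.zero_le _
  calc chunkLen k * (hardReq k i - c - 1)
      ≤ chunkLen k * ((hardReq k i - g) + (g - 1 - c)) := Nat.mul_le_mul_left _ (by omega)
    _ ≤ _ := by
        rw [mul_add]
        exact add_le_add (Nat.mul_le_mul_left _ (sub_le_gapCharge (by omega) hmem)) hwait

/-- The teasers served in gap `g` lie beyond `g` at doubling distances, and within the gap the
server goes from `≤ g` out to the farthest of them and back to `g`. -/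
theorem sum_gapTeasers_le_travel (hv : BlockVisits k κ σ visit)
    (hserve : ∀ i < hardLen k, serve i < hardLen k ∧ σ (serve i) = i) (hg : g < 2 ^ k) :
    ((∑ i ∈ gapTeasers k visit serve g, (hardReq k i - g) : ℕ) : ℝ) ≤
      ∑ u ∈ Ico (gapStart visit g) (gapStart visit (g + 1)),
        dist ((trajectory (hardReq k) 0 σ u : ℕ) : ℝ) (trajectory (hardReq k) 0 σ (u + 1) : ℕ) := by
  set F := gapTeasers k visit serve g
  rcases F.eq_empty_or_nonempty with hF | hF
  · rw [hF, sum_empty, Nat.cast_zero]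
    exact sum_nonneg fun _ _ => dist_nonneg
  have hF' : ∀ i ∈ F, (i < hardLen k ∧ IsTeaser k i) ∧ i / chunkLen k ≤ g ∧
      g < hardReq k i ∧ gapStart visit g ≤ serve i ∧ serve i ≤ visit g := fun i hi => by
    simpa [F, gapTeasers, teasers] using hi
  obtain ⟨i, hi, hmax⟩ := exists_max_image F (fun i => hardReq k i - g) hF
  obtain ⟨⟨hin, -⟩, -, hgi, hstart, hend⟩ := hF' i hi
  have hchain : ∑ j ∈ F, (hardReq k j - g) ≤ 2 * (hardReq k i - g) :=
    sum_le_two_mul_of_doubling _ F (fun a ha b hb hab => teaser_doubling (hF' a ha).1.2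
      (hF' b hb).1.2 hab (hF' a ha).2.1 (hF' a ha).2.2.1 (hF' b hb).2.1 (hF' b hb).2.2.1) hmax
  have hexcursion := two_mul_sub_le_sum_Ico_dist
    (P := fun u => ((trajectory (hardReq k) 0 σ u : ℕ) : ℝ)) (x := g)
    (hstart.trans (Nat.le_succ _)) (Nat.succ_le_succ hend)
    (by exact_mod_cast hv.trajectory_gapStart_le hg.le)
    (by simp [trajectory, (hv g hg).1])
  simp only [trajectory, (hserve i hin).2] at hexcursion
  calc ((∑ j ∈ F, (hardReq k j - g) : ℕ) : ℝ) ≤ ((2 * (hardReq k i - g) : ℕ) : ℝ) :=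
        Nat.cast_le.2 hchain
    _ = 2 * ((hardReq k i : ℝ) - g) := by push_cast [Nat.cast_sub hgi.le]; ring
    _ ≤ _ := hexcursion

theorem sum_gapCharge_le_schedCost (hk : 1 ≤ k) (hκ : 1 ≤ κ) (hv : BlockVisits k κ σ visit)
    (hserve : ∀ i < hardLen k, serve i < hardLen k ∧ σ (serve i) = i) :
    ((∑ i ∈ teasers k, gapCharge k visit serve i : ℕ) : ℝ) ≤
      schedCost lineDist (hardLen k) (fun i => (hardReq k i : ℤ)) ((0 : ℕ) : ℤ) σ := by
  rw [sum_gapCharge, Nat.cast_sum, schedCost_lineDist_natCast (hardLen_pos hk)]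
  calc _ ≤ ∑ g ∈ range (2 ^ k), ∑ u ∈ Ico (gapStart visit g) (gapStart visit (g + 1)),
        dist ((trajectory (hardReq k) 0 σ u : ℕ) : ℝ) (trajectory (hardReq k) 0 σ (u + 1) : ℕ) :=
        sum_le_sum fun g hg => sum_gapTeasers_le_travel hv hserve (mem_range.1 hg)
    _ = ∑ u ∈ range (gapStart visit (2 ^ k)),
        dist ((trajectory (hardReq k) 0 σ u : ℕ) : ℝ) (trajectory (hardReq k) 0 σ (u + 1) : ℕ) :=
        sum_range_sum_Ico_eq _ rfl hv.gapStart_le_succ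
    _ ≤ _ := sum_le_sum_of_subset_of_nonneg (range_subset_range.2 (hv.gapStart_two_pow_le hκ))
        fun _ _ _ => dist_nonneg

theorem totalDemand_le_schedCost_add (hκ : 1 ≤ κ) (hκk : κ ≤ k)
    (hσ : IsSchedule (hardLen k) σ) (hf : IsFeasible (hardLen k) κ σ) :
    (totalDemand k : ℝ) ≤
      schedCost lineDist (hardLen k) (fun i => (hardReq k i : ℤ)) ((0 : ℕ) : ℤ) σ +
        ((κ : ℝ) - 1) * 2 ^ k := by
  obtain ⟨visit, hv⟩ := exists_blockVisits hκ hκk hσ hf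
  obtain ⟨serve, hserve⟩ := hσ.exists_serveTime
  have hTn : teasers k ⊆ range (hardLen k) := filter_subset _ _
  have hdemand : chunkLen k * totalDemand k ≤
      chunkLen k * ∑ i ∈ teasers k, gapCharge k visit serve i + (κ - 1) * hardLen k := by
    rw [totalDemand, mul_sum, mul_sum]
    refine (sum_le_sum fun i hi => demand_le_gapCharge_add_delay (serve := serve) hv hi ?_).trans ?_
    · have hin := mem_range.1 (hTn hi)
      have := hf _ (hserve i hin).1
      rw [(hserve i hin).2] at this
      omega
    · rw [sum_add_distrib]
      exact Nat.add_le_add_left (hf.sum_serve_tsub_le hσ hserve hTn) _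
  have hdemandR : (chunkLen k : ℝ) * totalDemand k ≤
      chunkLen k * (((∑ i ∈ teasers k, gapCharge k visit serve i : ℕ) : ℝ) +
        ((κ : ℝ) - 1) * 2 ^ k) := by
    have := (Nat.cast_le (α := ℝ)).2 hdemand
    simp only [Nat.cast_add, Nat.cast_mul, Nat.cast_sub hκ, hardLen, Nat.cast_pow,
      Nat.cast_ofNat, Nat.cast_one] at this
    linarith
  have hLpos : (0 : ℝ) < chunkLen k := by
    exact_mod_cast (show 0 < chunkLen k by unfold chunkLen; omega)
  exact (le_of_mul_le_mul_left hdemandR hLpos).trans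
    (by gcongr; exact sum_gapCharge_le_schedCost (hκ.trans hκk) hκ hv hserve)

theorem mul_two_pow_le_schedCost (hκ : 1 ≤ κ) (h4κ : 4 * κ ≤ k) (hσ : IsSchedule (hardLen k) σ)
    (hf : IsFeasible (hardLen k) κ σ) :
    (κ : ℝ) * 2 ^ k ≤
      schedCost lineDist (hardLen k) (fun i => (hardReq k i : ℤ)) ((0 : ℕ) : ℤ) σ := by
  have hdemand := totalDemand_le_schedCost_add hκ (by omega) hσ hf
  have hlower := (Nat.cast_lt (α := ℝ)).2 (lt_totalDemand (k := k) (by omega))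
  simp only [Nat.cast_mul, Nat.cast_sub (show 2 ≤ k by omega), Nat.cast_pow,
    Nat.cast_ofNat] at hlower
  have hpow : (2 : ℝ) ^ k = 2 * 2 ^ (k - 1) := by
    rw [← pow_succ', Nat.sub_add_cancel (by omega)]
  have hk : (4 * κ : ℝ) ≤ k := by exact_mod_cast h4κ
  have : (0 : ℝ) ≤ (k - 4 * κ) * 2 ^ (k - 1) := mul_nonneg (by linarith) (by positivity)
  rw [hpow] at hdemand ⊢
  linarith

end HardInstance

theorem stmt_9 (k : ℕ) (hk : 4 ≤ k) (hdvd : 4 ∣ k) :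
    ∃ n : ℕ, 1 ≤ n ∧ ∃ (r : ℕ → ℤ) (x₀ : ℤ),
      (∃ σ, IsSchedule n σ ∧ IsFeasible n k σ ∧
        schedCost lineDist n r x₀ σ ≤ 2 ^ k - 1) ∧
      (∀ σ, IsSchedule n σ → IsFeasible n (k / 4) σ →
        (k : ℝ) / 4 * 2 ^ k ≤ schedCost lineDist n r x₀ σ) := by
  obtain ⟨κ, rfl⟩ := hdvd
  refine ⟨HardInstance.hardLen (4 * κ), HardInstance.hardLen_pos (by omega),
    fun i => (HardInstance.hardReq (4 * κ) i : ℤ), ((0 : ℕ) : ℤ),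
    HardInstance.exists_feasible_schedCost_le (by omega), fun σ hσ hf => ?_⟩
  rw [Nat.mul_div_cancel_left κ (by norm_num)] at hf
  calc ((4 * κ : ℕ) : ℝ) / 4 * 2 ^ (4 * κ) = κ * 2 ^ (4 * κ) := by push_cast; ring
    _ ≤ _ := HardInstance.mul_two_pow_le_schedCost (by omega) le_rfl hσ hf
end

section
/- Let k ≥ 1 be a natural number. Index the nodes of the complete binary tree of depth k by binary strings s of length at most k (the root is the empty string, the leaves are the strings of length k, and the children of an internal node s are s0 and s1); the height of a node s is h(s) = k − |s|. Suppose f assigns to each node a real number such that f(s) ≥ 0 for every node s, and f(s) ≥ f(s0) + f(s1) + 2^{h(s)−1} for every internal node s (i.e., with |s| < k). Then f(s) ≥ (h(s)/2)·2^{h(s)} for every node s; in particular, f at the root is at least (k/2)·2^k. -/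
/- **Statement 11 (abstract inductive core of the appendix lemma).**
Nodes of the complete binary tree of depth `k` are binary strings `s` (lists
of Booleans) of length at most `k`; the height of `s` is `h(s) = k − |s|`.
If `f` is nonnegative on nodes and satisfies
`f(s) ≥ f(s0) + f(s1) + 2^{h(s)−1}` at every internal node `s`, then
`f(s) ≥ (h(s)/2)·2^{h(s)}` at every node; in particular
`f(root) ≥ (k/2)·2^k`. -/
theorem stmt_11 (k : ℕ) (hk : 1 ≤ k) (f : List Bool → ℝ)
    (hnn : ∀ s : List Bool, s.length ≤ k → 0 ≤ f s)
    (hrec : ∀ s : List Bool, s.length < k →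
      f (s ++ [false]) + f (s ++ [true]) + 2 ^ (k - s.length - 1) ≤ f s) :
    (∀ s : List Bool, s.length ≤ k →
      ((k - s.length : ℕ) : ℝ) / 2 * 2 ^ (k - s.length) ≤ f s) ∧
    (k : ℝ) / 2 * 2 ^ k ≤ f [] := by
  have main : ∀ n : ℕ, ∀ s : List Bool, s.length ≤ k → k - s.length = n →
      ((k - s.length : ℕ) : ℝ) / 2 * 2 ^ (k - s.length) ≤ f s := by
    intro n
    induction n with
    | zero =>
      intro s hs h0
      rw [h0]
      simpa using hnn s hs
    | succ n ih =>
      intro s hs hn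
      have hlt : s.length < k := by omega
      have h0 : (s ++ [false]).length ≤ k := by simp; omega
      have h1 : (s ++ [true]).length ≤ k := by simp; omega
      have e0 : k - (s ++ [false]).length = n := by simp; omega
      have e1 : k - (s ++ [true]).length = n := by simp; omega
      have c0 := ih (s ++ [false]) h0 e0
      have c1 := ih (s ++ [true]) h1 e1
      rw [e0] at c0; rw [e1] at c1
      have hr := hrec s hlt
      have hpow : k - s.length - 1 = n := by omega
      rw [hpow] at hr
      rw [hn]
      have : ((n + 1 : ℕ) : ℝ) / 2 * 2 ^ (n + 1)
          = (n : ℝ) / 2 * 2 ^ n + (n : ℝ) / 2 * 2 ^ n + 2 ^ n := by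
        push_cast; ring
      rw [this]
      linarith
  refine ⟨fun s hs => main (k - s.length) s hs rfl, ?_⟩
  have := main k [] (by simp) (by simp)
  simpa using this
end
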